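/- The abelianization of the hybrid H(3) is a finite group. -/

import Mathlib

noncomputable section

open Matrix Complex

/-- GL(3,ℂ): the group of invertible 3×3 complex matrices. -/
abbrev GL3 : Type := (Matrix (Fin 3) (Fin 3) ℂ)ˣ

/-- PGL(3,ℂ): the quotient of GL(3,ℂ) by its center. -/
abbrev PGL3 : Type := GL3 ⧸ Subgroup.center GL3

/-- The projection GL(3,ℂ) → PGL(3,ℂ). -/
def pgl : GL3 →* PGL3 := QuotientGroup.mk' (Subgroup.center GL3)

/-- The class [M] ∈ PGL(3,ℂ) of an (invertible) matrix M. -/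
noncomputable def cls (M : Matrix (Fin 3) (Fin 3) ℂ) : PGL3 := by
  classical exact if h : IsUnit M then pgl h.unit else 1

/-- The Hermitian matrix of signature (2,1) defining the Siegel model. -/
def Hform : Matrix (Fin 3) (Fin 3) ℂ := !![0,0,1; 0,1,0; 1,0,0]

lemma Hform_mul_Hform : Hform * Hform = 1 := by
  rw [Hform, Matrix.mul_fin_three, Matrix.one_fin_three]
  norm_num

/-- U(2,1,O): the subgroup of GL(3,ℂ) of matrices with entries in O
satisfying Mᴴ H M = H, for O a subring of ℂ closed under conjugation. -/
def U21 (O : Subring ℂ) (hO : ∀ z ∈ O, (starRingEnd ℂ) z ∈ O) : Subgroup GL3 where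
  carrier := {M : GL3 | (∀ i j, (M : Matrix (Fin 3) (Fin 3) ℂ) i j ∈ O) ∧
      (M : Matrix (Fin 3) (Fin 3) ℂ)ᴴ * Hform * (M : Matrix (Fin 3) (Fin 3) ℂ) = Hform}
  one_mem' := by
    constructor
    · intro i j
      by_cases h : i = j <;> simp [Matrix.one_apply, h, Subring.one_mem, Subring.zero_mem]
    · simp
  mul_mem' := by
    rintro a b ⟨ha1, ha2⟩ ⟨hb1, hb2⟩
    constructor
    · intro i j
      rw [Units.val_mul, Matrix.mul_apply]
      exact Subring.sum_mem _ fun k _ => Subring.mul_mem _ (ha1 i k) (hb1 k j)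
    · rw [Units.val_mul, Matrix.conjTranspose_mul]
      calc (↑b)ᴴ * (↑a)ᴴ * Hform * ((↑a : Matrix (Fin 3) (Fin 3) ℂ) * ↑b)
          = (↑b)ᴴ * ((↑a)ᴴ * Hform * ↑a) * ↑b := by simp only [mul_assoc]
        _ = (↑b)ᴴ * Hform * ↑b := by rw [ha2]
        _ = Hform := hb2
  inv_mem' := by
    rintro a ⟨ha1, ha2⟩
    have hBA : (Hform * (a.val)ᴴ * Hform) * a.val = 1 := by
      calc (Hform * (a.val)ᴴ * Hform) * a.val
          = Hform * ((a.val)ᴴ * Hform * a.val) := by simp only [mul_assoc]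
        _ = Hform * Hform := by rw [ha2]
        _ = 1 := Hform_mul_Hform
    have hInv : (a⁻¹).val = Hform * (a.val)ᴴ * Hform :=
      Units.inv_eq_of_mul_eq_one_left hBA
    have hab : a.val * (a⁻¹).val = 1 := a.mul_inv
    constructor
    · intro i j
      rw [hInv]
      simp only [Matrix.mul_apply, Fin.sum_univ_three]
      fin_cases i <;> fin_cases j <;>
        simp [Hform, Matrix.conjTranspose_apply, Matrix.vecHead, Matrix.vecTail, Function.comp] <;>
        exact hO _ (ha1 _ _)
    · calc ((a⁻¹).val)ᴴ * Hform * (a⁻¹).val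
          = ((a⁻¹).val)ᴴ * ((a.val)ᴴ * Hform * a.val) * (a⁻¹).val := by rw [ha2]
        _ = (a.val * (a⁻¹).val)ᴴ * Hform * (a.val * (a⁻¹).val) := by
            rw [Matrix.conjTranspose_mul]; simp only [mul_assoc]
        _ = Hform := by rw [hab]; simp

/-- PU(2,1,O): the image of U(2,1,O) in PGL(3,ℂ). -/
def PU21 (O : Subring ℂ) (hO : ∀ z ∈ O, (starRingEnd ℂ) z ∈ O) : Subgroup PGL3 :=
  (U21 O hO).map pgl

lemma conjClosed (s : Set ℂ) (h : ∀ z ∈ s, (starRingEnd ℂ) z ∈ Subring.closure s) :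
    ∀ z ∈ Subring.closure s, (starRingEnd ℂ) z ∈ Subring.closure s := by
  intro z hz
  have hle : Subring.closure s ≤ (Subring.closure s).comap (starRingEnd ℂ) :=
    Subring.closure_le.mpr fun x hx => Subring.mem_comap.mpr (h x hx)
  exact Subring.mem_comap.mp (hle hz)


-- test ring pieces
section rings
open Matrix Complex

/-- ω = (−1+i√3)/2, a primitive cube root of unity. -/
def omega3 : ℂ := (-1 + Complex.I * (Real.sqrt 3 : ℝ)) / 2

/-- O₃ = ℤ[ω], the Eisenstein integers. -/
def O3 : Subring ℂ := Subring.closure {omega3}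

lemma conj_omega3 : (starRingEnd ℂ) omega3 = -1 - omega3 := by
  rw [omega3]
  rw [map_div₀, map_add, _root_.map_mul, Complex.conj_I, Complex.conj_ofReal]
  rw [map_neg, _root_.map_one, _root_.map_ofNat]
  ring

lemma hO3 : ∀ z ∈ O3, (starRingEnd ℂ) z ∈ O3 := by
  apply conjClosed
  intro z hz
  rw [Set.mem_singleton_iff] at hz
  subst hz
  rw [conj_omega3]
  exact sub_mem (neg_mem (Subring.one_mem _)) (Subring.subset_closure rfl)

/-- O₁ = ℤ[i], the Gaussian integers. -/
def O1 : Subring ℂ := Subring.closure {Complex.I}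

lemma hO1 : ∀ z ∈ O1, (starRingEnd ℂ) z ∈ O1 := by
  apply conjClosed
  intro z hz
  rw [Set.mem_singleton_iff] at hz
  subst hz
  rw [Complex.conj_I]
  exact neg_mem (Subring.subset_closure rfl)

/-- τ = (1+i√7)/2. -/
def tau7 : ℂ := (1 + Complex.I * (Real.sqrt 7 : ℝ)) / 2

/-- O₇ = ℤ[(1+i√7)/2], the ring of integers of ℚ(i√7). -/
def O7 : Subring ℂ := Subring.closure {tau7}

lemma conj_tau7 : (starRingEnd ℂ) tau7 = 1 - tau7 := by
  rw [tau7]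
  rw [map_div₀, map_add, _root_.map_mul, Complex.conj_I, Complex.conj_ofReal]
  rw [_root_.map_one, _root_.map_ofNat]
  ring

lemma hO7 : ∀ z ∈ O7, (starRingEnd ℂ) z ∈ O7 := by
  apply conjClosed
  intro z hz
  rw [Set.mem_singleton_iff] at hz
  subst hz
  rw [conj_tau7]
  exact sub_mem (Subring.one_mem _) (Subring.subset_closure rfl)

end rings

section matrices
open Matrix Complex

/-- The Cayley transform J. -/
def Jmat : Matrix (Fin 3) (Fin 3) ℂ := !![1,1,0; 0,1,-1; 1,1,-1]

-- d = 3 ------------------------------------------------------------------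
def E1d3 : Matrix (Fin 3) (Fin 3) ℂ :=
  !![omega3^2, omega3^2 - 1, omega3 + 2;
     Complex.I * (Real.sqrt 3 : ℝ), 1 + Complex.I * (Real.sqrt 3 : ℝ), omega3^2 - 1;
     Complex.I * (Real.sqrt 3 : ℝ), Complex.I * (Real.sqrt 3 : ℝ), omega3^2]

def U1d3 : Matrix (Fin 3) (Fin 3) ℂ :=
  !![1, 0, Complex.I * (Real.sqrt 3 : ℝ); 0, 1, 0; 0, 0, 1]

def U2d3 : Matrix (Fin 3) (Fin 3) ℂ :=
  !![1, 0, 0; 0, 1, 0; Complex.I * (Real.sqrt 3 : ℝ), 0, 1]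

def I1d3 : Matrix (Fin 3) (Fin 3) ℂ := Jmat⁻¹ * !![-1,0,0; 0,1,0; 0,0,-1] * Jmat

def I2d3 : Matrix (Fin 3) (Fin 3) ℂ := Jmat⁻¹ * !![1,0,0; 0,-1,0; 0,0,-1] * Jmat

/-- The Falbel–Parker generators of PU(2,1,O₃). -/
def Pd3 : Matrix (Fin 3) (Fin 3) ℂ := !![1, 1, omega3; 0, omega3, -omega3; 0, 0, 1]

def Qd3 : Matrix (Fin 3) (Fin 3) ℂ := !![1, 1, omega3; 0, -1, 1; 0, 0, 1]

def Rd3 : Matrix (Fin 3) (Fin 3) ℂ := !![0, 0, 1; 0, -1, 0; 1, 0, 0]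

/-- The hybrid H(3). -/
def H3 : Subgroup PGL3 :=
  Subgroup.closure {cls E1d3, cls U1d3, cls U2d3, cls I1d3, cls I2d3}

/-- The hybrid H̃(3). -/
def Ht3 : Subgroup PGL3 := Subgroup.closure {cls E1d3, cls U1d3, cls U2d3}

/-- The hybrid H'(3). -/
def H'3 : Subgroup PGL3 :=
  Subgroup.closure {cls (Pd3^2 * (Rd3 * Qd3^2) * (Pd3^2)⁻¹), cls (Qd3^2), cls (Rd3 * Qd3^2 * Rd3)}

/-- The Eisenstein–Picard modular group Γ(3) = PU(2,1,O₃). -/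
def Gamma3 : Subgroup PGL3 := PU21 O3 hO3

-- d = 1 ------------------------------------------------------------------
def E1d1 : Matrix (Fin 3) (Fin 3) ℂ :=
  !![Complex.I, -1 + Complex.I, 1 - Complex.I;
     -2 * Complex.I, 1 - 2 * Complex.I, -1 + Complex.I;
     -2 * Complex.I, -2 * Complex.I, Complex.I]

def U1d1 : Matrix (Fin 3) (Fin 3) ℂ := !![1, 0, Complex.I; 0, 1, 0; 0, 0, 1]

def E2d1 : Matrix (Fin 3) (Fin 3) ℂ :=
  !![Complex.I, 2 * Complex.I, -2 * Complex.I;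
     1 - Complex.I, 1 - 2 * Complex.I, 2 * Complex.I;
     1 - Complex.I, 1 - Complex.I, Complex.I]

def U2d1 : Matrix (Fin 3) (Fin 3) ℂ := !![1, 0, 0; 0, 1, 0; Complex.I, 0, 1]

/-- The Falbel–Francsics–Parker generators of PU(2,1,O₁). -/
def I0d1 : Matrix (Fin 3) (Fin 3) ℂ := !![0, 0, 1; 0, -1, 0; 1, 0, 0]

def Qd1 : Matrix (Fin 3) (Fin 3) ℂ :=
  !![1, 1 - Complex.I, -1; 0, -1, 1 + Complex.I; 0, 0, 1]

def Td1 : Matrix (Fin 3) (Fin 3) ℂ := !![1, 0, Complex.I; 0, 1, 0; 0, 0, 1]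

def R1d1 : Matrix (Fin 3) (Fin 3) ℂ := Jmat⁻¹ * !![Complex.I,0,0; 0,1,0; 0,0,1] * Jmat

def R2d1 : Matrix (Fin 3) (Fin 3) ℂ := Jmat⁻¹ * !![1,0,0; 0,Complex.I,0; 0,0,1] * Jmat

/-- The hybrid H(1). -/
def H1 : Subgroup PGL3 := Subgroup.closure {cls E1d1, cls U1d1, cls E2d1, cls U2d1}

/-- The hybrid H'(1). -/
def H'1 : Subgroup PGL3 := Subgroup.closure {cls R1d1, cls R2d1, cls U1d1, cls U2d1}

/-- The Gauss–Picard modular group Γ(1) = PU(2,1,O₁). -/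
def Gamma1 : Subgroup PGL3 := PU21 O1 hO1

-- d = 7 ------------------------------------------------------------------
def U1d7 : Matrix (Fin 3) (Fin 3) ℂ :=
  !![1, 0, Complex.I * (Real.sqrt 7 : ℝ); 0, 1, 0; 0, 0, 1]

def U2d7 : Matrix (Fin 3) (Fin 3) ℂ :=
  !![1, 0, 0; 0, 1, 0; Complex.I * (Real.sqrt 7 : ℝ), 0, 1]

def A1d7 : Matrix (Fin 3) (Fin 3) ℂ :=
  !![-(1/2) + Complex.I * (Real.sqrt 7 : ℝ) / 2, -(3/2) + Complex.I * (Real.sqrt 7 : ℝ) / 2,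
       1/2 - Complex.I * (Real.sqrt 7 : ℝ) / 2;
     1, 2, -(3/2) + Complex.I * (Real.sqrt 7 : ℝ) / 2;
     1, 1, -(1/2) + Complex.I * (Real.sqrt 7 : ℝ) / 2]

def B1d7 : Matrix (Fin 3) (Fin 3) ℂ := !![1, 0, 0; -2, -1, 0; -2, -2, 1]

def A2d7 : Matrix (Fin 3) (Fin 3) ℂ :=
  !![-(1/2) + Complex.I * (Real.sqrt 7 : ℝ) / 2, -1, 1;
     3/2 - Complex.I * (Real.sqrt 7 : ℝ) / 2, 2, -1;
     1/2 - Complex.I * (Real.sqrt 7 : ℝ) / 2, 3/2 - Complex.I * (Real.sqrt 7 : ℝ) / 2,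
       -(1/2) + Complex.I * (Real.sqrt 7 : ℝ) / 2]

def B2d7 : Matrix (Fin 3) (Fin 3) ℂ := !![1, 2, -2; 0, -1, 2; 0, 0, 1]

/-- The Mark–Paupert generators of PU(2,1,O₇). -/
def T1d7 : Matrix (Fin 3) (Fin 3) ℂ :=
  !![1, -1, -(1/2) + Complex.I * (Real.sqrt 7 : ℝ) / 2; 0, 1, 1; 0, 0, 1]

def Rd7 : Matrix (Fin 3) (Fin 3) ℂ := !![1, 0, 0; 0, -1, 0; 0, 0, 1]

def Id7 : Matrix (Fin 3) (Fin 3) ℂ := !![0, 0, 1; 0, -1, 0; 1, 0, 0]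

/-- The hybrid H(7). -/
def H7 : Subgroup PGL3 :=
  Subgroup.closure {cls U1d7, cls U2d7, cls A1d7, cls A2d7, cls B1d7, cls B2d7}

/-- The Picard modular group Γ(7) = PU(2,1,O₇). -/
def Gamma7 : Subgroup PGL3 := PU21 O7 hO7

end matrices

section presented
/-- The relators c², a⁶, aca⁻¹c⁻¹, (ab)³, (cab)³, b² in the free group on a,b,c
(a = of 0, b = of 1, c = of 2). -/
def relsG : Set (FreeGroup (Fin 3)) :=
  {(FreeGroup.of 2)^2, (FreeGroup.of 0)^6,
   FreeGroup.of 0 * FreeGroup.of 2 * (FreeGroup.of 0)⁻¹ * (FreeGroup.of 2)⁻¹,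
   (FreeGroup.of 0 * FreeGroup.of 1)^3,
   (FreeGroup.of 2 * FreeGroup.of 0 * FreeGroup.of 1)^3,
   (FreeGroup.of 1)^2}

/-- The presented group G = ⟨a,b,c | c², a⁶, [a,c], (ab)³, (cab)³, b²⟩. -/
abbrev Gpres := PresentedGroup relsG
end presented


/-! A finitely generated abelian group generated by elements of finite order is finite. The
five generators of H(3) have finite order in its abelianization: E₁³ = I₁² = I₂² = 1 already in
GL(3,ℂ), modulo commutators the relation U₁E₁I₂U₁I₂E₁ = 1 says U₁² = (E₁I₂)⁻², and U₂U₁ has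
order 3. -/

theorem Subgroup.finite_abelianization_closure {G : Type*} [Group G] {S : Set G} (hS : S.Finite)
    (h : ∀ s (hs : s ∈ S),
      IsOfFinOrder (Abelianization.of (⟨s, subset_closure hs⟩ : closure S))) :
    Finite (Abelianization (closure S)) := by
  have : Finite S := hS
  have hof : Function.Surjective (Abelianization.of : closure S →* _) :=
    QuotientGroup.mk_surjective
  have : Group.FG (Abelianization (closure S)) := Group.fg_of_surjective hof
  refine CommGroup.finite_of_fg_isMulTorsion _ fun x => ?_
  obtain ⟨y, rfl⟩ := hof x
  have hle : closure (((↑) : closure S → G) ⁻¹' S) ≤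
      (CommGroup.torsion _).comap Abelianization.of :=
    (closure_le _).2 fun y hy => h y hy
  exact hle (closure_closure_coe_preimage (k := S) ▸ mem_top y)

theorem IsOfFinOrder.abelianization_of {G : Type*} [Group G] {K : Subgroup G} {x : K}
    (h : IsOfFinOrder (x : G)) : IsOfFinOrder (Abelianization.of x) :=
  Abelianization.of.isOfFinOrder (Submonoid.isOfFinOrder_coe.1 h)

theorem Matrix.conj_mul_self_eq_one {n R : Type*} [Fintype n] [DecidableEq n] [CommRing R]
    {P D : Matrix n n R} (hP : IsUnit P.det) (hD : D * D = 1) :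
    (P⁻¹ * D * P) * (P⁻¹ * D * P) = 1 := by
  calc P⁻¹ * D * P * (P⁻¹ * D * P) = P⁻¹ * D * (P * P⁻¹) * D * P := by simp only [mul_assoc]
    _ = 1 := by
      rw [mul_nonsing_inv _ hP, mul_one, mul_assoc P⁻¹, hD, mul_one, nonsing_inv_mul _ hP]

section cls

variable {M N : Matrix (Fin 3) (Fin 3) ℂ}

theorem cls_of_isUnit (h : IsUnit M) : cls M = pgl h.unit := dif_pos h

theorem cls_one : cls 1 = 1 := by
  rw [cls_of_isUnit isUnit_one, IsUnit.unit_one, map_one]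

theorem cls_mul (hM : IsUnit M) (hN : IsUnit N) : cls (M * N) = cls M * cls N := by
  rw [cls_of_isUnit (hM.mul hN), IsUnit.unit_mul, map_mul, cls_of_isUnit hM, cls_of_isUnit hN]

theorem isOfFinOrder_cls {n : ℕ} (h : M ^ n = 1) (hn : n ≠ 0) : IsOfFinOrder (cls M) := by
  have hM := IsUnit.of_pow_eq_one h hn
  refine isOfFinOrder_iff_pow_eq_one.2 ⟨n, Nat.pos_of_ne_zero hn, ?_⟩
  rw [cls_of_isUnit hM, ← map_pow, ← IsUnit.unit_pow, ← cls_of_isUnit, h, cls_one]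

end cls

section matrices

theorem I_mul_sqrt_three : I * ((√3 : ℝ) : ℂ) = 2 * omega3 + 1 := by
  rw [omega3]; ring

theorem omega3_sq_add_omega3_add_one : omega3 ^ 2 + omega3 + 1 = 0 := by
  have h : (I * ((√3 : ℝ) : ℂ)) ^ 2 = -3 := by
    rw [mul_pow, I_sq, ← ofReal_pow, Real.sq_sqrt (by norm_num)]
    norm_num
  rw [omega3]; linear_combination h / 4

theorem E1d3_pow_three : E1d3 ^ 3 = 1 := by
  have := omega3_sq_add_omega3_add_one
  rw [pow_three, E1d3, I_mul_sqrt_three, mul_fin_three, mul_fin_three, one_fin_three]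
  refine congrArg of (vec3_eq (vec3_eq ?_ ?_ ?_) (vec3_eq ?_ ?_ ?_) (vec3_eq ?_ ?_ ?_)) <;> grind

theorem U2d3_mul_U1d3_pow_three : (U2d3 * U1d3) ^ 3 = 1 := by
  have := omega3_sq_add_omega3_add_one
  rw [pow_three, U2d3, U1d3, I_mul_sqrt_three]
  simp only [mul_fin_three, one_fin_three]
  refine congrArg of (vec3_eq (vec3_eq ?_ ?_ ?_) (vec3_eq ?_ ?_ ?_) (vec3_eq ?_ ?_ ?_)) <;> grind

theorem Jmat_inv : Jmat⁻¹ = !![0, -1, 1; 1, 1, -1; 1, 0, -1] := by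
  refine inv_eq_right_inv ?_
  rw [Jmat, mul_fin_three, one_fin_three]
  norm_num

theorem isUnit_det_Jmat : IsUnit Jmat.det := by
  simp [Jmat, det_fin_three]

theorem I2d3_eq : I2d3 = !![-1, 0, 0; 2, 1, 0; 2, 2, -1] := by
  rw [I2d3, Jmat_inv, Jmat, mul_fin_three, mul_fin_three]
  norm_num

theorem U1d3_mul_E1d3_mul_I2d3_mul_U1d3_mul_I2d3_mul_E1d3 :
    U1d3 * E1d3 * I2d3 * U1d3 * I2d3 * E1d3 = 1 := by
  have := omega3_sq_add_omega3_add_one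
  rw [I2d3_eq, U1d3, E1d3, I_mul_sqrt_three]
  simp only [mul_fin_three, one_fin_three]
  refine congrArg of (vec3_eq (vec3_eq ?_ ?_ ?_) (vec3_eq ?_ ?_ ?_) (vec3_eq ?_ ?_ ?_)) <;> grind

theorem I1d3_mul_self : I1d3 * I1d3 = 1 :=
  conj_mul_self_eq_one isUnit_det_Jmat (by rw [mul_fin_three, one_fin_three]; norm_num)

theorem I2d3_mul_self : I2d3 * I2d3 = 1 :=
  conj_mul_self_eq_one isUnit_det_Jmat (by rw [mul_fin_three, one_fin_three]; norm_num)

theorem isUnit_E1d3 : IsUnit E1d3 := .of_pow_eq_one E1d3_pow_three three_ne_zero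

theorem isUnit_I2d3 : IsUnit I2d3 := .of_pow_eq_one (pow_two I2d3 ▸ I2d3_mul_self) two_ne_zero

theorem isUnit_U1d3 : IsUnit U1d3 := (isUnit_iff_isUnit_det _).2 (by simp [U1d3, det_fin_three])

theorem isUnit_U2d3 : IsUnit U2d3 := (isUnit_iff_isUnit_det _).2 (by simp [U2d3, det_fin_three])

end matrices

namespace H3

def E₁ : H3 := ⟨cls E1d3, Subgroup.subset_closure (by simp)⟩
def U₁ : H3 := ⟨cls U1d3, Subgroup.subset_closure (by simp)⟩
def U₂ : H3 := ⟨cls U2d3, Subgroup.subset_closure (by simp)⟩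
def I₁ : H3 := ⟨cls I1d3, Subgroup.subset_closure (by simp)⟩
def I₂ : H3 := ⟨cls I2d3, Subgroup.subset_closure (by simp)⟩

theorem isOfFinOrder_of_E₁ : IsOfFinOrder (Abelianization.of E₁) :=
  .abelianization_of (isOfFinOrder_cls E1d3_pow_three three_ne_zero)

theorem isOfFinOrder_of_I₁ : IsOfFinOrder (Abelianization.of I₁) :=
  .abelianization_of (isOfFinOrder_cls (pow_two I1d3 ▸ I1d3_mul_self) two_ne_zero)

theorem isOfFinOrder_of_I₂ : IsOfFinOrder (Abelianization.of I₂) :=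
  .abelianization_of (isOfFinOrder_cls (pow_two I2d3 ▸ I2d3_mul_self) two_ne_zero)

theorem isOfFinOrder_of_U₁ : IsOfFinOrder (Abelianization.of U₁) := by
  have hrel : U₁ * E₁ * I₂ * U₁ * I₂ * E₁ = 1 := Subtype.ext <| by
    show cls U1d3 * cls E1d3 * cls I2d3 * cls U1d3 * cls I2d3 * cls E1d3 = 1
    rw [← cls_one, ← U1d3_mul_E1d3_mul_I2d3_mul_U1d3_mul_I2d3_mul_E1d3]
    simp (maxDischargeDepth := 5) only
      [cls_mul, IsUnit.mul, isUnit_U1d3, isUnit_E1d3, isUnit_I2d3]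
  have hsq : Abelianization.of U₁ ^ 2 = ((Abelianization.of E₁ * Abelianization.of I₂) ^ 2)⁻¹ := by
    have h := congrArg Abelianization.of hrel
    simp only [map_mul, map_one] at h
    rw [eq_inv_iff_mul_eq_one, ← h]
    simp only [sq, mul_left_comm, mul_comm]
  refine IsOfFinOrder.of_pow (n := 2) ?_ two_ne_zero
  rw [hsq]
  exact ((isOfFinOrder_of_E₁.mul isOfFinOrder_of_I₂).pow).inv

theorem isOfFinOrder_of_U₂ : IsOfFinOrder (Abelianization.of U₂) := by
  have hprod : IsOfFinOrder (Abelianization.of (U₂ * U₁)) := .abelianization_of <| by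
    show IsOfFinOrder (cls U2d3 * cls U1d3)
    rw [← cls_mul isUnit_U2d3 isUnit_U1d3]
    exact isOfFinOrder_cls U2d3_mul_U1d3_pow_three three_ne_zero
  have hU₂ : Abelianization.of U₂ = Abelianization.of (U₂ * U₁) * (Abelianization.of U₁)⁻¹ := by
    rw [map_mul, mul_inv_cancel_right]
  rw [hU₂]
  exact hprod.mul isOfFinOrder_of_U₁.inv

end H3

/-- the abelianization of the hybrid H(3) is finite. -/
theorem stmt6 : Finite (Abelianization ↥H3) := by
  refine Subgroup.finite_abelianization_closure (Set.toFinite _) ?_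
  simp only [Set.mem_insert_iff, Set.mem_singleton_iff]
  rintro s (rfl | rfl | rfl | rfl | rfl)
  exacts [H3.isOfFinOrder_of_E₁, H3.isOfFinOrder_of_U₁, H3.isOfFinOrder_of_U₂,
    H3.isOfFinOrder_of_I₁, H3.isOfFinOrder_of_I₂]

end
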